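/- Let T be a k-Steiner root of a graph G and let X, X' be clique-intersections of G such that C(T⟨X⟩) ⊆ C(T⟨X'⟩). Then X ∪ X' is a clique of G. -/

import Mathlib

noncomputable def setEcc {V : Type*} (T : SimpleGraph V) (S : Set V) (v : V) : ℕ :=
  sSup {d | ∃ u ∈ S, T.dist v u = d}

noncomputable def setDiam {V : Type*} (T : SimpleGraph V) (S : Set V) : ℕ :=
  sSup {d | ∃ u ∈ S, ∃ w ∈ S, T.dist u w = d}

noncomputable def setRad {V : Type*} (T : SimpleGraph V) (S : Set V) : ℕ :=
  sInf {e | ∃ v ∈ S, setEcc T S v = e}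

noncomputable def setCenter {V : Type*} (T : SimpleGraph V) (S : Set V) : Set V :=
  {v ∈ S | setEcc T S v = setRad T S}

/-- `T` is a `k`-Steiner root of `G` (via the injection `f` of the vertices of
`G` into the nodes of `T`): `T` is a tree and two distinct vertices of `G` are
adjacent iff their images are at distance at most `k` in `T`. -/
def IsSteinerRoot (k : ℕ) {α β : Type*} (G : SimpleGraph α) (T : SimpleGraph β)
    (f : α → β) : Prop :=
  Function.Injective f ∧ T.IsTree ∧
    ∀ u v : α, u ≠ v → (G.Adj u v ↔ T.dist (f u) (f v) ≤ k)

/-- The vertex set of the smallest subtree of the tree `T` containing `X`: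
all nodes lying on a path between two elements of `X`. -/
def span {β : Type*} (T : SimpleGraph β) (X : Set β) : Set β :=
  {w | ∃ u ∈ X, ∃ v ∈ X, ∃ p : T.Walk u v, p.IsPath ∧ w ∈ p.support}

def IsMaxClique {α : Type*} (G : SimpleGraph α) (K : Set α) : Prop :=
  G.IsClique K ∧ ∀ K', G.IsClique K' → K ⊆ K' → K' = K

/-- `X` is the intersection of a nonempty family of maximal cliques of `G`. -/
def IsCliqueIntersection {α : Type*} (G : SimpleGraph α) (X : Set α) : Prop :=
  ∃ 𝒦 : Set (Set α), 𝒦.Nonempty ∧ (∀ K ∈ 𝒦, IsMaxClique G K) ∧ X = ⋂₀ 𝒦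


/-!
Both `f '' X` and `f '' X'` have diameter at most `k` in `T`, so their subtrees have radius
`r, r'` with `2r, 2r' ≤ k + 1`. For `x` in the first subtree some center `c` of it satisfies
`2 d(c, x) ≤ k`: if a center is at distance `(k+1)/2` from `x`, its neighbour towards `x` is still
a center. This `c` is also a center of the second subtree, so for `y ∈ f '' X'` we get
`2 d(x, y) ≤ k + (k + 1)`, i.e. `d(x, y) ≤ k`, which is adjacency in `G`.
-/

namespace SimpleGraph

variable {V : Type*} {G : SimpleGraph V}

def Between (G : SimpleGraph V) (u x v : V) : Prop :=
  G.dist u x + G.dist x v = G.dist u v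

lemma Between.symm {u x v : V} (h : G.Between u x v) : G.Between v x u := by
  rw [Between, dist_comm, add_comm, dist_comm (u := x), h, dist_comm]

lemma Connected.between_trans (hG : G.Connected) {u z y v : V} (hz : G.Between u z y)
    (hy : G.Between u y v) : G.Between u z v := by
  have := hG.dist_triangle (u := z) (v := y) (w := v)
  have := hG.dist_triangle (u := u) (v := z) (w := v)
  unfold Between at *
  omega

lemma Connected.exists_between_dist_eq (hG : G.Connected) {u v : V} {i : ℕ}
    (hi : i ≤ G.dist u v) : ∃ m, G.dist u m = i ∧ G.Between u m v := by
  obtain ⟨p, hp⟩ := hG.exists_walk_length_eq_dist u v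
  have hu := length_eq_dist_of_subwalk hp (p.isSubwalk_take i)
  have hv := length_eq_dist_of_subwalk hp (p.isSubwalk_drop i)
  rw [Walk.take_length] at hu
  rw [Walk.drop_length] at hv
  refine ⟨p.getVert i, by omega, ?_⟩
  unfold Between
  omega

lemma Connected.exists_isPath_mem_support_of_between (hG : G.Connected) {u x v : V}
    (h : G.Between u x v) : ∃ p : G.Walk u v, p.IsPath ∧ x ∈ p.support := by
  obtain ⟨p, -, hp⟩ := hG.exists_path_of_dist u x
  obtain ⟨q, -, hq⟩ := hG.exists_path_of_dist x v
  refine ⟨p.append q, (p.append q).isPath_of_length_eq_dist ?_, ?_⟩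
  · rw [Walk.length_append, hp, hq, h]
  · exact (Walk.mem_support_append_iff _ _).mpr (Or.inl p.end_mem_support)

lemma IsAcyclic.length_eq_dist_of_isPath (hG : G.IsAcyclic) {u v : V} {p : G.Walk u v}
    (hp : p.IsPath) : p.length = G.dist u v := by
  obtain ⟨q, hq, hql⟩ := p.reachable.exists_path_of_dist
  rw [show p = q from congrArg Subtype.val ((hG.subsingleton_path u v).elim ⟨p, hp⟩ ⟨q, hq⟩), hql]

lemma IsAcyclic.between_of_mem_support (hG : G.IsAcyclic) {u x v : V} {p : G.Walk u v}
    (hp : p.IsPath) (hx : x ∈ p.support) : G.Between u x v := by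
  classical
  unfold Between
  rw [← hG.length_eq_dist_of_isPath (hp.takeUntil hx),
    ← hG.length_eq_dist_of_isPath (hp.dropUntil hx), ← hG.length_eq_dist_of_isPath hp,
    ← Walk.length_append, p.take_spec hx]

/-- In a tree, a point between `u` and `v` separates `u` from `v`, so every `q` is on one side. -/
lemma IsTree.between_or_between (hG : G.IsTree) {u x v : V} (h : G.Between u x v) (q : V) :
    G.Between u x q ∨ G.Between q x v := by
  classical
  obtain ⟨p, hp, hxp⟩ := hG.connected.exists_isPath_mem_support_of_between h
  obtain ⟨r, hr, -⟩ := hG.connected.exists_path_of_dist u q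
  obtain ⟨s, hs, -⟩ := hG.connected.exists_path_of_dist q v
  have hp_eq : p = (r.append s).bypass :=
    congrArg Subtype.val ((hG.isAcyclic.subsingleton_path u v).elim ⟨p, hp⟩
      ⟨_, (r.append s).bypass_isPath⟩)
  have hx : x ∈ (r.append s).support :=
    (r.append s).support_bypass_subset_support (hp_eq ▸ hxp)
  rcases (Walk.mem_support_append_iff _ _).mp hx with hx | hx
  · exact Or.inl (hG.isAcyclic.between_of_mem_support hr hx)
  · exact Or.inr (hG.isAcyclic.between_of_mem_support hs hx)

lemma IsTree.dist_le_max_of_between (hG : G.IsTree) {u x v : V} (h : G.Between u x v) (w : V) :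
    G.dist x w ≤ max (G.dist u w) (G.dist v w) := by
  have := dist_comm (G := G) (u := v) (v := w)
  have := dist_comm (G := G) (u := w) (v := x)
  rcases hG.between_or_between h w with h | h <;> unfold Between at h <;> omega

end SimpleGraph

open SimpleGraph

section Span

variable {β : Type*} {T : SimpleGraph β} {S : Set β}

lemma subset_span : S ⊆ span T S := fun x hx =>
  ⟨x, hx, x, hx, .nil, .nil, Walk.start_mem_support _⟩

lemma mem_span_iff (hT : T.IsTree) {x : β} :
    x ∈ span T S ↔ ∃ u ∈ S, ∃ v ∈ S, T.Between u x v := by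
  constructor
  · rintro ⟨u, hu, v, hv, p, hp, hx⟩
    exact ⟨u, hu, v, hv, hT.isAcyclic.between_of_mem_support hp hx⟩
  · rintro ⟨u, hu, v, hv, h⟩
    obtain ⟨p, hp, hx⟩ := hT.connected.exists_isPath_mem_support_of_between h
    exact ⟨u, hu, v, hv, p, hp, hx⟩

lemma mem_span_of_between (hT : T.IsTree) {x y z : β} (hx : x ∈ span T S)
    (hy : y ∈ span T S) (hz : T.Between x z y) : z ∈ span T S := by
  rw [mem_span_iff hT] at hx hy ⊢
  obtain ⟨u, hu, v, hv, hx⟩ := hx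
  obtain ⟨u', hu', v', hv', hy⟩ := hy
  rcases hT.between_or_between hz u' with h | h
  · rcases hT.between_or_between h.symm u with h' | h'
    · exact ⟨u', hu', u, hu, h'⟩
    · exact ⟨u, hu, v, hv, hT.connected.between_trans h' hx⟩
  · exact ⟨u', hu', v', hv', hT.connected.between_trans h hy⟩

lemma dist_le_of_mem_span (hT : T.IsTree) {k : ℕ} (hk : ∀ p ∈ S, ∀ q ∈ S, T.dist p q ≤ k)
    {x y : β} (hx : x ∈ span T S) (hy : y ∈ span T S) : T.dist x y ≤ k := by
  have dist_le_of_mem : ∀ w ∈ span T S, ∀ q ∈ S, T.dist w q ≤ k := by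
    intro w hw q hq
    obtain ⟨u, hu, v, hv, h⟩ := (mem_span_iff hT).mp hw
    exact (hT.dist_le_max_of_between h q).trans (max_le (hk u hu q hq) (hk v hv q hq))
  obtain ⟨u, hu, v, hv, h⟩ := (mem_span_iff hT).mp hy
  rw [dist_comm]
  refine (hT.dist_le_max_of_between h x).trans (max_le ?_ ?_) <;> rw [dist_comm]
  exacts [dist_le_of_mem x hx u hu, dist_le_of_mem x hx v hv]

end Span

section Eccentricity

variable {β : Type*} {T : SimpleGraph β} {S : Set β}

lemma dist_le_setEcc [Finite β] {v u : β} (hu : u ∈ S) : T.dist v u ≤ setEcc T S v :=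
  le_csSup ((S.toFinite.image (T.dist v)).bddAbove) ⟨u, hu, rfl⟩

lemma setEcc_le {v : β} {n : ℕ} (h : ∀ u ∈ S, T.dist v u ≤ n) : setEcc T S v ≤ n :=
  csSup_le' (by rintro d ⟨u, hu, rfl⟩; exact h u hu)

lemma setRad_le_setEcc {v : β} (hv : v ∈ S) : setRad T S ≤ setEcc T S v :=
  Nat.sInf_le ⟨v, hv, rfl⟩

lemma setCenter_nonempty (hS : S.Nonempty) : (setCenter T S).Nonempty := by
  obtain ⟨v, hv, he⟩ := Nat.sInf_mem (s := {e | ∃ v ∈ S, setEcc T S v = e})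
    ⟨_, hS.some, hS.some_mem, rfl⟩
  exact ⟨v, hv, he⟩

lemma mem_setCenter_of_setEcc_le {v : β} (hv : v ∈ S) (h : ∀ u ∈ S, T.dist v u ≤ setRad T S) :
    v ∈ setCenter T S :=
  ⟨hv, le_antisymm (setEcc_le h) (setRad_le_setEcc hv)⟩

lemma dist_le_setRad_of_mem_setCenter [Finite β] {c u : β} (hc : c ∈ setCenter T S)
    (hu : u ∈ S) : T.dist c u ≤ setRad T S :=
  hc.2 ▸ dist_le_setEcc hu

lemma dist_le_setDiam [Finite β] {u w : β} (hu : u ∈ S) (hw : w ∈ S) :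
    T.dist u w ≤ setDiam T S := by
  refine le_csSup ?_ ⟨u, hu, w, hw, rfl⟩
  refine ((S.toFinite.prod S.toFinite).image fun p : β × β => T.dist p.1 p.2).bddAbove.mono ?_
  rintro d ⟨u, hu, w, hw, rfl⟩
  exact ⟨(u, w), ⟨hu, hw⟩, rfl⟩

lemma exists_dist_eq_setDiam [Finite β] (hS : S.Nonempty) :
    ∃ u ∈ S, ∃ w ∈ S, T.dist u w = setDiam T S :=
  Nat.sSup_mem (s := {d | ∃ u ∈ S, ∃ w ∈ S, T.dist u w = d})
    ⟨0, hS.some, hS.some_mem, hS.some, hS.some_mem, dist_self⟩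
    ⟨setDiam T S, by rintro d ⟨u, hu, w, hw, rfl⟩; exact dist_le_setDiam hu hw⟩

lemma setDiam_le {n : ℕ} (h : ∀ u ∈ S, ∀ w ∈ S, T.dist u w ≤ n) : setDiam T S ≤ n :=
  csSup_le' (by rintro d ⟨u, hu, w, hw, rfl⟩; exact h u hu w hw)

lemma setDiam_span_le (hT : T.IsTree) {k : ℕ} (hk : ∀ p ∈ S, ∀ q ∈ S, T.dist p q ≤ k) :
    setDiam T (span T S) ≤ k :=
  setDiam_le fun _ hp _ hq => dist_le_of_mem_span hT hk hp hq

/-- The point at distance `⌈D/2⌉` from `u` on a diametral path `u—w` has eccentricity `≤ ⌈D/2⌉`. -/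
lemma two_mul_setRad_span_le [Finite β] (hT : T.IsTree) (hS : (span T S).Nonempty) :
    2 * setRad T (span T S) ≤ setDiam T (span T S) + 1 := by
  set D := setDiam T (span T S)
  obtain ⟨u, hu, w, hw, huw⟩ := exists_dist_eq_setDiam (T := T) hS
  obtain ⟨m, hum, hm⟩ := hT.connected.exists_between_dist_eq (u := u) (v := w)
    (i := (D + 1) / 2) (by omega)
  have hecc : ∀ p ∈ span T S, T.dist m p ≤ (D + 1) / 2 := by
    intro p hp
    have hup : T.dist u p ≤ D := dist_le_setDiam hu hp
    have hpw : T.dist p w ≤ D := dist_le_setDiam hp hw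
    have := dist_comm (G := T) (u := m) (v := p)
    rcases hT.between_or_between hm p with h | h <;> unfold Between at h hm <;> omega
  have := (setRad_le_setEcc (mem_span_of_between hT hu hw hm)).trans (setEcc_le hecc)
  omega

lemma exists_mem_setCenter_span_two_mul_dist_le [Finite β] (hT : T.IsTree) {k : ℕ}
    (hk : ∀ p ∈ S, ∀ q ∈ S, T.dist p q ≤ k) {x : β} (hx : x ∈ span T S) :
    ∃ c ∈ setCenter T (span T S), 2 * T.dist c x ≤ k := by
  set r := setRad T (span T S)
  have hr : 2 * r ≤ k + 1 :=
    (two_mul_setRad_span_le hT ⟨x, hx⟩).trans (Nat.succ_le_succ (setDiam_span_le hT hk))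
  obtain ⟨c, hc⟩ := setCenter_nonempty (T := T) ⟨x, hx⟩
  have hcx : T.dist c x ≤ r := dist_le_setRad_of_mem_setCenter hc hx
  by_cases hck : 2 * T.dist c x ≤ k
  · exact ⟨c, hc, hck⟩
  -- Now `2 d(c, x) = k + 1 = 2r`, and the neighbour `c'` of `c` towards `x` is again a center.
  obtain ⟨c', hxc', hc'⟩ := hT.connected.exists_between_dist_eq (u := x) (v := c)
    (i := r - 1) (by rw [dist_comm]; omega)
  have hecc : ∀ p ∈ span T S, T.dist c' p ≤ r := by
    intro p hp
    have hxp : T.dist x p ≤ k := dist_le_of_mem_span hT hk hx hp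
    have hcp : T.dist c p ≤ r := dist_le_setRad_of_mem_setCenter hc hp
    have := dist_comm (G := T) (u := c') (v := p)
    have := dist_comm (G := T) (u := c) (v := p)
    rcases hT.between_or_between hc' p with h | h <;> unfold Between at h hc' <;> omega
  refine ⟨c', mem_setCenter_of_setEcc_le (mem_span_of_between hT hx hc.1 hc') hecc, ?_⟩
  rw [dist_comm]
  omega

lemma dist_le_of_setCenter_span_subset [Finite β] (hT : T.IsTree) {S' : Set β} {k : ℕ}
    (hk : ∀ p ∈ S, ∀ q ∈ S, T.dist p q ≤ k) (hk' : ∀ p ∈ S', ∀ q ∈ S', T.dist p q ≤ k)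
    (hc : setCenter T (span T S) ⊆ setCenter T (span T S')) {x y : β} (hx : x ∈ S)
    (hy : y ∈ S') : T.dist x y ≤ k := by
  obtain ⟨c, hcS, hcx⟩ := exists_mem_setCenter_span_two_mul_dist_le hT hk (subset_span hx)
  have hcy : T.dist c y ≤ setRad T (span T S') :=
    dist_le_setRad_of_mem_setCenter (hc hcS) (subset_span hy)
  have hr' : 2 * setRad T (span T S') ≤ k + 1 :=
    (two_mul_setRad_span_le hT ⟨y, subset_span hy⟩).trans
      (Nat.succ_le_succ (setDiam_span_le hT hk'))
  have := hT.connected.dist_triangle (u := x) (v := c) (w := y)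
  have := dist_comm (G := T) (u := x) (v := c)
  omega

end Eccentricity

lemma IsCliqueIntersection.isClique {α : Type*} {G : SimpleGraph α} {X : Set α}
    (hX : IsCliqueIntersection G X) : G.IsClique X := by
  obtain ⟨𝒦, ⟨K, hK⟩, hmax, rfl⟩ := hX
  exact (hmax K hK).1.subset (Set.sInter_subset_of_mem hK)

lemma IsSteinerRoot.dist_le_of_isClique {α β : Type*} {k : ℕ} {G : SimpleGraph α}
    {T : SimpleGraph β} {f : α → β} (hroot : IsSteinerRoot k G T f) {X : Set α}
    (hX : G.IsClique X) : ∀ p ∈ f '' X, ∀ q ∈ f '' X, T.dist p q ≤ k := by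
  rintro _ ⟨a, ha, rfl⟩ _ ⟨b, hb, rfl⟩
  obtain rfl | hab := eq_or_ne a b
  · simp
  · exact (hroot.2.2 a b hab).mp (hX ha hb hab)

theorem stmt9_general {α β : Type*} [Fintype β] (k : ℕ)
    (G : SimpleGraph α) (T : SimpleGraph β) (f : α → β)
    (hroot : IsSteinerRoot k G T f) (X X' : Set α)
    (hX : IsCliqueIntersection G X) (hX' : IsCliqueIntersection G X')
    (hc : setCenter T (span T (f '' X)) ⊆ setCenter T (span T (f '' X'))) :
    G.IsClique (X ∪ X') := by
  have hk := hroot.dist_le_of_isClique hX.isClique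
  have hk' := hroot.dist_le_of_isClique hX'.isClique
  have cross : ∀ a ∈ X, ∀ b ∈ X', T.dist (f a) (f b) ≤ k := fun a ha b hb =>
    dist_le_of_setCenter_span_subset hroot.2.1 hk hk' hc ⟨a, ha, rfl⟩ ⟨b, hb, rfl⟩
  intro a ha b hb hab
  rw [hroot.2.2 a b hab]
  rcases ha with ha | ha <;> rcases hb with hb | hb
  · exact hk _ ⟨a, ha, rfl⟩ _ ⟨b, hb, rfl⟩
  · exact cross a ha b hb
  · exact dist_comm (G := T) ▸ cross b hb a ha
  · exact hk' _ ⟨a, ha, rfl⟩ _ ⟨b, hb, rfl⟩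

/-- If `X, X'` are clique-intersections with `C(T⟨X⟩) ⊆ C(T⟨X'⟩)` in a
`k`-Steiner root `T` of `G`, then `X ∪ X'` is a clique of `G`. -/
theorem stmt9 {α β : Type*} [Fintype α] [Fintype β] (k : ℕ)
    (G : SimpleGraph α) (hG : G.Connected) (T : SimpleGraph β) (f : α → β)
    (hroot : IsSteinerRoot k G T f) (X X' : Set α)
    (hX : IsCliqueIntersection G X) (hX' : IsCliqueIntersection G X')
    (hc : setCenter T (span T (f '' X)) ⊆ setCenter T (span T (f '' X'))) :
    G.IsClique (X ∪ X') :=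
  stmt9_general k G T f hroot X X' hX hX' hc
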